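/- Let (S_X, S_Z) be a CSS stabilizer code on a finite type Q satisfying the duality and intersection assumptions, let ρ be an encoded state, let α : Finset Q be tolerable, and let β ∈ S_X with β ∉ Z(G_α). Then trace(ρ · A_α · X_β · A_α†) = 0. (Lemma A4(ii).) -/

import Mathlib

/-!
If `α ∩ β` met every `X`-stabilizer evenly it would lie in `Z_Z(S) ∩ G_α`, hence in `S_Z` by
tolerability; but then every generator of `G_α` meets `β` evenly, i.e. `β ∈ Z(G_α)`. So some
`c ∈ S_X` meets `α ∩ β` in an odd number of qubits. Conjugating `A_α X_β A_α†` by `X_c` multiplies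
it by `i ^ (-2 g(α ∩ β ∩ c)) = -1`, as `b` is odd, whereas `X_c ρ X_c = ρ`; by cyclicity of the
trace the expectation value equals its own negative.
-/

open Finset
open scoped symmDiff Matrix

namespace CC

variable {Q : Type*} [Fintype Q] [DecidableEq Q]

/-- A subgroup of the abelian group `(Finset Q, ∆)`. -/
def IsSubgroup (S : Set (Finset Q)) : Prop :=
  ∅ ∈ S ∧ ∀ a ∈ S, ∀ b ∈ S, a ∆ b ∈ S

/-- The subgroup of `(Finset Q, ∆)` generated by a set. -/
def closure (T : Set (Finset Q)) : Set (Finset Q) :=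
  ⋂₀ {S : Set (Finset Q) | IsSubgroup S ∧ T ⊆ S}

/-- A CSS stabilizer code on the qubits `Q`. -/
structure CSS (Q : Type*) [Fintype Q] [DecidableEq Q] where
  SX : Set (Finset Q)
  SZ : Set (Finset Q)
  hSX : IsSubgroup SX
  hSZ : IsSubgroup SZ
  comm : ∀ a ∈ SZ, ∀ b ∈ SX, 2 ∣ (a ∩ b).card

def ZX (C : CSS Q) : Set (Finset Q) := {γ | ∀ f ∈ C.SZ, 2 ∣ (γ ∩ f).card}

def ZZ (C : CSS Q) : Set (Finset Q) := {z | ∀ c ∈ C.SX, 2 ∣ (z ∩ c).card}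

/-- Duality assumption. -/
def Dual (C : CSS Q) : Prop :=
  C.SZ = {z | ∀ γ ∈ ZX C, 2 ∣ (z ∩ γ).card} ∧
  C.SX = {c | ∀ z ∈ ZZ C, 2 ∣ (c ∩ z).card}

def LogicalX (C : CSS Q) (l : Finset Q) : Prop := l ∈ ZX C ∧ l ∉ C.SX

def LogicalZ (C : CSS Q) (l : Finset Q) : Prop := l ∈ ZZ C ∧ l ∉ C.SZ

/-- Single-logical-qubit assumption. -/
def SingleQubit (C : CSS Q) : Prop :=
  (ZX C ≠ C.SX ∧ ∀ l l', LogicalX C l → LogicalX C l' → l ∆ l' ∈ C.SX) ∧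
  (ZZ C ≠ C.SZ ∧ ∀ l l', LogicalZ C l → LogicalZ C l' → l ∆ l' ∈ C.SZ)

/-- Intersection axiom. -/
def Inter (C : CSS Q) : Prop :=
  ZZ C = {x | ∃ α ∈ ZX C, ∃ β ∈ ZX C, x = α ∩ β}

def G (C : CSS Q) (α : Finset Q) : Set (Finset Q) :=
  closure (C.SZ ∪ {x | ∃ β ∈ ZX C, x = α ∩ β})

def H (C : CSS Q) (α : Finset Q) : Set (Finset Q) :=
  closure (C.SZ ∪ {x | ∃ β ∈ C.SX, x = α ∩ β})

def Zof (K : Set (Finset Q)) : Set (Finset Q) := {γ | ∀ h ∈ K, 2 ∣ (γ ∩ h).card}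

def Tolerable (C : CSS Q) (α : Finset Q) : Prop := ∀ z ∈ G C α, ¬ LogicalZ C z

def g (b : Q → ℤ) (s : Finset Q) : ℤ := ∑ q ∈ s, b q

/-- T-invariance assumption. -/
def TInv (C : CSS Q) (b : Q → ℤ) : Prop :=
  (∀ β ∈ C.SX, (8 : ℤ) ∣ g b β) ∧
  (∀ β ∈ C.SX, ∀ γ ∈ ZX C, (8 : ℤ) ∣ (g b β - 2 * g b (γ ∩ β)))

def E (C : CSS Q) (b : Q → ℤ) (α : Finset Q) : Set (Finset Q) :=
  {z | ∀ γ ∈ Zof (G C α), g b (γ ∩ α) ≡ 2 * ((z ∩ γ).card : ℤ) [ZMOD 4]}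

/- Quantum setting -/

abbrev M (Q : Type*) [Fintype Q] [DecidableEq Q] :=
  Matrix (Q → ZMod 2) (Q → ZMod 2) ℂ

def supp (v : Q → ZMod 2) : Finset Q := Finset.univ.filter (fun q => v q = 1)

def ind (α : Finset Q) : Q → ZMod 2 := fun q => if q ∈ α then 1 else 0

def XM (α : Finset Q) : M Q :=
  Matrix.of fun u v => if u = v + ind α then (1 : ℂ) else 0

noncomputable def ZM (α : Finset Q) : M Q :=
  Matrix.diagonal fun v => (-1 : ℂ) ^ (supp v ∩ α).card

noncomputable def AM (b : Q → ℤ) (α : Finset Q) : M Q :=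
  Matrix.diagonal fun v => Complex.I ^ (g b (α ∩ supp v))

noncomputable def UM (b : Q → ℤ) : M Q :=
  Matrix.diagonal fun v => Complex.exp (Real.pi * Complex.I / 4) ^ (g b (supp v))

def Encoded (C : CSS Q) (ρ : M Q) : Prop :=
  ρ.trace = 1 ∧
  (∀ c ∈ C.SX, XM c * ρ = ρ ∧ ρ * XM c = ρ) ∧
  (∀ f ∈ C.SZ, ZM f * ρ = ρ ∧ ρ * ZM f = ρ)

instance : Std.Commutative (α := Finset Q) (· ∆ ·) := ⟨symmDiff_comm⟩
instance : Std.Associative (α := Finset Q) (· ∆ ·) := ⟨symmDiff_assoc⟩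

/-- Iterated symmetric difference over a finite index set. -/
def bigΔ {ι : Type*} (s : Finset ι) (f : ι → Finset Q) : Finset Q :=
  s.fold (· ∆ ·) ∅ f

section SymmDiff

variable {ι : Type*} [DecidableEq ι]

lemma g_symmDiff (b : ι → ℤ) (s t : Finset ι) :
    g b (s ∆ t) = g b s + g b t - 2 * g b (s ∩ t) := by
  have hdisj : Disjoint (s ∆ t) (s ∩ t) := by
    rw [Finset.disjoint_left]
    intro q hq hq'
    rw [Finset.mem_symmDiff] at hq
    rw [Finset.mem_inter] at hq'
    tauto
  have hunion : s ∆ t ∪ s ∩ t = s ∪ t := by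
    ext q
    simp only [Finset.mem_union, Finset.mem_symmDiff, Finset.mem_inter]
    tauto
  have h₁ := Finset.sum_union hdisj (f := b)
  have h₂ := Finset.sum_union_inter (s₁ := s) (s₂ := t) (f := b)
  rw [hunion] at h₁
  unfold g
  linarith

lemma g_inter_symmDiff (b : ι → ℤ) (a s t : Finset ι) :
    g b (a ∩ (s ∆ t)) = g b (a ∩ s) + g b (a ∩ t) - 2 * g b (a ∩ t ∩ s) := by
  rw [show a ∩ (s ∆ t) = (a ∩ s) ∆ (a ∩ t) from inf_symmDiff_distrib_left a s t, g_symmDiff]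
  congr 3
  ext q
  simp only [Finset.mem_inter]
  tauto

lemma g_inter_symmDiff_symmDiff_sub (b : ι → ℤ) (a s β c : Finset ι) :
    g b (a ∩ (s ∆ β ∆ c)) - g b (a ∩ (s ∆ c)) =
      g b (a ∩ (s ∆ β)) - g b (a ∩ s) + 2 * (2 * g b (a ∩ β ∩ c ∩ s) - g b (a ∩ β ∩ c)) := by
  rw [symmDiff_right_comm, g_inter_symmDiff b a (s ∆ c) β, g_inter_symmDiff b (a ∩ β) s c,
    g_inter_symmDiff b a s β]
  ring

lemma card_symmDiff_add_two_mul_card_inter (s t : Finset ι) :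
    (s ∆ t).card + 2 * (s ∩ t).card = s.card + t.card := by
  have := g_symmDiff (fun _ => (1 : ℤ)) s t
  simp only [g, Finset.sum_const, nsmul_eq_mul, mul_one] at this
  omega

lemma isSubgroup_setOf_even_card_inter (γ : Finset ι) :
    IsSubgroup {h | 2 ∣ (γ ∩ h).card} := by
  refine ⟨by simp, fun a ha b hb => ?_⟩
  have hcard := card_symmDiff_add_two_mul_card_inter (γ ∩ a) (γ ∩ b)
  rw [show (γ ∩ a) ∆ (γ ∩ b) = γ ∩ (a ∆ b) from (inf_symmDiff_distrib_left γ a b).symm] at hcard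
  simp only [Set.mem_ofPred_eq] at ha hb ⊢
  omega

lemma subset_closure {T : Set (Finset ι)} : T ⊆ closure T :=
  fun _ hx _ hS => hS.2 hx

lemma closure_subset {T S : Set (Finset ι)} (hS : IsSubgroup S) (hTS : T ⊆ S) :
    closure T ⊆ S :=
  fun _ hx => hx S ⟨hS, hTS⟩

lemma Zof_closure (T : Set (Finset ι)) : Zof (closure T) = Zof T :=
  Set.ext fun _ => ⟨fun h x hx => h x (subset_closure hx),
    fun h => closure_subset (isSubgroup_setOf_even_card_inter _) h⟩

end SymmDiff

lemma odd_g_iff {ι : Type*} {b : ι → ℤ} (hb : ∀ q, Odd (b q)) {s : Finset ι} :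
    Odd (g b s) ↔ Odd s.card := by
  have hcast : (g b s : ZMod 2) = s.card := by
    simp only [g, Int.cast_sum, (hb _).intCast_zmod_two, Finset.sum_const, nsmul_eq_mul, mul_one]
  rw [← ZMod.intCast_eq_one_iff_odd, hcast, ZMod.natCast_eq_one_iff_odd]

lemma I_zpow_add_two_mul_of_odd (n : ℤ) {k : ℤ} (hk : Odd k) :
    Complex.I ^ (n + 2 * k) = -Complex.I ^ n := by
  rw [zpow_add₀ Complex.I_ne_zero, zpow_mul, show (2 : ℤ) = (2 : ℕ) from rfl, zpow_natCast,
    Complex.I_sq, hk.neg_one_zpow, mul_neg_one]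

lemma star_I_zpow (n : ℤ) : star (Complex.I ^ n) = Complex.I ^ (-n) := by
  rw [Complex.star_def, map_zpow₀, Complex.conj_I, ← Complex.inv_I, inv_zpow, zpow_neg]

section Code

variable (C : CSS Q)

lemma SX_subset_ZX : C.SX ⊆ ZX C :=
  fun β hβ f hf => Finset.inter_comm f β ▸ C.comm f hf β hβ

lemma inter_mem_G {α γ : Finset Q} (hγ : γ ∈ ZX C) : α ∩ γ ∈ G C α :=
  subset_closure (Or.inr ⟨γ, hγ, rfl⟩)

variable {C}

lemma exists_mem_SX_odd_card_inter {α β : Finset Q} (htol : Tolerable C α) (hβ : β ∈ C.SX)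
    (hβ' : β ∉ Zof (G C α)) : ∃ c ∈ C.SX, Odd (α ∩ β ∩ c).card := by
  by_contra! heven
  have hZZ : α ∩ β ∈ ZZ C := fun c hc => (Nat.not_odd_iff_even.mp (heven c hc)).two_dvd
  have hSZ : α ∩ β ∈ C.SZ := by
    by_contra hnot
    exact htol _ (inter_mem_G C (SX_subset_ZX C hβ)) ⟨hZZ, hnot⟩
  apply hβ'
  rw [G, Zof_closure]
  rintro x (hx | ⟨γ, hγ, rfl⟩)
  · exact Finset.inter_comm x β ▸ C.comm x hx β hβ
  · have hrearrange : β ∩ (α ∩ γ) = γ ∩ (α ∩ β) := by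
      ext q
      simp only [Finset.mem_inter]
      tauto
    exact hrearrange ▸ hγ _ hSZ

end Code

theorem _root_.Matrix.trace_mul_eq_zero_of_conj_eq_neg {n R : Type*} [Fintype n] [CommRing R]
    [NoZeroDivisors R] [CharZero R] {ρ X N : Matrix n n R} (hρ : X * ρ * X = ρ)
    (hN : X * N * X = -N) : (ρ * N).trace = 0 := by
  rw [← CharZero.eq_neg_self_iff, ← Matrix.trace_neg, ← Matrix.mul_neg, ← hN]
  conv_lhs => rw [← hρ]
  rw [Matrix.mul_assoc, Matrix.mul_assoc, Matrix.trace_mul_comm X]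
  simp only [Matrix.mul_assoc]

lemma eq_add_iff_eq_add_zmod_two {ι : Type*} (u v w : ι → ZMod 2) : u = v + w ↔ v = u + w := by
  have hcancel : ∀ x : ι → ZMod 2, x + w + w = x := fun x => by
    ext q
    simp [add_assoc, CharTwo.add_self_eq_zero]
  constructor <;> rintro rfl <;> exact (hcancel _).symm

lemma supp_add_ind (v : Q → ZMod 2) (c : Finset Q) : supp (v + ind c) = supp v ∆ c := by
  have hflip : ∀ x : ZMod 2, x + 1 = 1 ↔ ¬x = 1 := by decide
  ext q
  simp only [supp, Finset.mem_symmDiff, Finset.mem_filter, Finset.mem_univ, true_and]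
  by_cases hq : q ∈ c <;> simp [ind, hq, hflip]

lemma XM_mul_apply (c : Finset Q) (N : M Q) (u v : Q → ZMod 2) :
    (XM c * N) u v = N (u + ind c) v := by
  simp [Matrix.mul_apply, XM, eq_add_iff_eq_add_zmod_two u]

lemma mul_XM_apply (c : Finset Q) (N : M Q) (u v : Q → ZMod 2) :
    (N * XM c) u v = N u (v + ind c) := by
  simp [Matrix.mul_apply, XM]

lemma AM_mul_XM_mul_conjTranspose_apply (b : Q → ℤ) (α β : Finset Q) (u v : Q → ZMod 2) :
    (AM b α * XM β * (AM b α)ᴴ) u v =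
      if u = v + ind β then Complex.I ^ (g b (α ∩ supp u) - g b (α ∩ supp v)) else 0 := by
  rw [AM, Matrix.diagonal_conjTranspose, Matrix.mul_diagonal, Matrix.diagonal_mul,
    Pi.star_apply, star_I_zpow, sub_eq_add_neg, zpow_add₀ Complex.I_ne_zero]
  simp only [XM, Matrix.of_apply, mul_ite, ite_mul, mul_one, mul_zero, zero_mul]

lemma XM_mul_AM_mul_XM_mul_conjTranspose_mul_XM {b : Q → ℤ} (hb : ∀ q, Odd (b q))
    {α β c : Finset Q} (hodd : Odd (α ∩ β ∩ c).card) :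
    XM c * (AM b α * XM β * (AM b α)ᴴ) * XM c = -(AM b α * XM β * (AM b α)ᴴ) := by
  ext u v
  rw [Matrix.neg_apply, mul_XM_apply, XM_mul_apply, AM_mul_XM_mul_conjTranspose_apply,
    AM_mul_XM_mul_conjTranspose_apply]
  have hshift : u + ind c = v + ind c + ind β ↔ u = v + ind β := by
    rw [add_right_comm v, add_left_inj]
  by_cases h : u = v + ind β
  · subst h
    rw [if_pos (hshift.mpr rfl), if_pos rfl, supp_add_ind, supp_add_ind, supp_add_ind,
      g_inter_symmDiff_symmDiff_sub]
    exact I_zpow_add_two_mul_of_odd _ (Even.sub_odd (even_two_mul _) ((odd_g_iff hb).mpr hodd))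
  · rw [if_neg (mt hshift.mp h), if_neg h, neg_zero]

theorem expectation_noncommuting_stabilizer_general
    (C : CSS Q) (b : Q → ℤ) (hb : ∀ q, Odd (b q))
    (ρ : M Q) (hρ : Encoded C ρ)
    (α : Finset Q) (htol : Tolerable C α)
    (β : Finset Q) (hβ : β ∈ C.SX) (hβ' : β ∉ Zof (G C α)) :
    (ρ * (AM b α * XM β * (AM b α)ᴴ)).trace = 0 := by
  obtain ⟨c, hc, hodd⟩ := exists_mem_SX_odd_card_inter htol hβ hβ'
  obtain ⟨hcρ, hρc⟩ := hρ.2.1 c hc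
  exact Matrix.trace_mul_eq_zero_of_conj_eq_neg (by rw [hcρ, hρc])
    (XM_mul_AM_mul_XM_mul_conjTranspose_mul_XM hb hodd)

/-- Lemma A4(ii): for tolerable `α` and `β ∈ S_X` with `β ∉ Z(G_α)`, the expectation
value `⟨A_α X_β A_α†⟩_ρ` vanishes. -/
theorem expectation_noncommuting_stabilizer
    (C : CSS Q) (b : Q → ℤ) (hb : ∀ q, Odd (b q))
    (hdual : Dual C) (hinter : Inter C)
    (ρ : M Q) (hρ : Encoded C ρ)
    (α : Finset Q) (htol : Tolerable C α)
    (β : Finset Q) (hβ : β ∈ C.SX) (hβ' : β ∉ Zof (G C α)) :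
    (ρ * (AM b α * XM β * (AM b α)ᴴ)).trace = 0 :=
  expectation_noncommuting_stabilizer_general C b hb ρ hρ α htol β hβ hβ'

end CC
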